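/- Let (x_i) be a normalized 1-unconditional sequence in a real Banach space X that is C-right dominant. In the product space W = X × X equipped with the norm ‖(u, v)‖ = max(‖u‖, ‖v‖), define w_{2i−1} = (x_i, 0) and w_{2i} = (0, x_i) for all i ∈ ℕ. Then the sequence (w_i) is 5C-right dominant. -/
import Mathlib


open scoped BigOperators

variable {X : Type*} [NormedAddCommGroup X] [NormedSpace ℝ X]

/-- A sequence is 1-unconditional if changing signs of coefficients does not change the
norm of finite linear combinations. -/
def OneUnconditional (x : ℕ → X) : Prop :=
  ∀ (s : Finset ℕ) (a ε : ℕ → ℝ), (∀ i, ε i = 1 ∨ ε i = -1) →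
    ‖∑ i ∈ s, (ε i * a i) • x i‖ = ‖∑ i ∈ s, a i • x i‖

/-- A sequence `w` in a normed space `E` is `C`-right dominant: for indices
`k 0 ≤ m 0 < k 1 ≤ m 1 < ⋯` every finite linear combination along the `k`'s is
`C`-dominated by the same combination along the `m`'s. -/
def RightDominant {E : Type*} [NormedAddCommGroup E] [NormedSpace ℝ E]
    (C : ℝ) (w : ℕ → E) : Prop :=
  ∀ (r : ℕ) (k m : ℕ → ℕ) (a : ℕ → ℝ), (∀ i, k i ≤ m i) → (∀ i, m i < k (i + 1)) →
    ‖∑ i ∈ Finset.range r, a i • w (k i)‖ ≤ C * ‖∑ i ∈ Finset.range r, a i • w (m i)‖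

lemma supp1 (x : ℕ → X) (hu : OneUnconditional x) (s' s : Finset ℕ) (hss : s' ⊆ s)
    (b : ℕ → ℝ) : ‖∑ i ∈ s', b i • x i‖ ≤ ‖∑ i ∈ s, b i • x i‖ := by
  classical
  set ε : ℕ → ℝ := fun i => if i ∈ s' then 1 else -1 with hε
  have hεs : ∀ i, ε i = 1 ∨ ε i = -1 := fun i => by
    by_cases h : i ∈ s' <;> simp [hε, h]
  have key := hu s b ε hεs
  have h2 : (∑ i ∈ s, (ε i * b i) • x i) + ∑ i ∈ s, b i • x i
      = (2:ℝ) • ∑ i ∈ s', b i • x i := by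
    rw [← Finset.sum_add_distrib]
    have hcong : ∀ i ∈ s, (ε i * b i) • x i + b i • x i
        = if i ∈ s' then (2:ℝ) • (b i • x i) else 0 := by
      intro i _
      by_cases h : i ∈ s'
      · simp only [hε, if_pos h, one_mul, two_smul]
      · simp [hε, if_neg h, neg_smul]
    rw [Finset.sum_congr rfl hcong, Finset.sum_ite_mem,
      Finset.inter_eq_right.mpr hss, Finset.smul_sum]
  have h3 : ‖(2:ℝ) • ∑ i ∈ s', b i • x i‖ ≤ 2 * ‖∑ i ∈ s, b i • x i‖ := by
    rw [← h2]
    calc ‖(∑ i ∈ s, (ε i * b i) • x i) + ∑ i ∈ s, b i • x i‖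
        ≤ ‖∑ i ∈ s, (ε i * b i) • x i‖ + ‖∑ i ∈ s, b i • x i‖ := norm_add_le _ _
      _ = 2 * ‖∑ i ∈ s, b i • x i‖ := by rw [key]; ring
  rw [norm_smul] at h3
  simp only [Real.norm_ofNat] at h3
  linarith

lemma supp_comp (x : ℕ → X) (hu : OneUnconditional x) (s' s : Finset ℕ) (hss : s' ⊆ s)
    (M : ℕ → ℕ) (hM : Set.InjOn M s) (a : ℕ → ℝ) :
    ‖∑ i ∈ s', a i • x (M i)‖ ≤ ‖∑ i ∈ s, a i • x (M i)‖ := by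
  classical
  set b : ℕ → ℝ := fun j => ∑ i ∈ s.filter (fun i => M i = j), a i with hb
  have hbM : ∀ i ∈ s, b (M i) = a i := by
    intro i hi
    have hfil : s.filter (fun l => M l = M i) = {i} := by
      ext l
      simp only [Finset.mem_filter, Finset.mem_singleton]
      constructor
      · rintro ⟨hl, hMl⟩; exact hM hl hi hMl
      · rintro rfl; exact ⟨hi, rfl⟩
    simp [hb, hfil]
  have hinj : ∀ i ∈ s, ∀ j ∈ s, M i = M j → i = j := fun i hi j hj h => hM hi hj h
  have hinj' : ∀ i ∈ s', ∀ j ∈ s', M i = M j → i = j :=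
    fun i hi j hj h => hM (hss hi) (hss hj) h
  have e1 : ∑ i ∈ s, a i • x (M i) = ∑ j ∈ s.image M, b j • x j := by
    rw [Finset.sum_image hinj]
    exact (Finset.sum_congr rfl fun i hi => by rw [hbM i hi]).symm
  have e2 : ∑ i ∈ s', a i • x (M i) = ∑ j ∈ s'.image M, b j • x j := by
    rw [Finset.sum_image hinj']
    exact (Finset.sum_congr rfl fun i hi => by rw [hbM i (hss hi)]).symm
  rw [e1, e2]
  exact supp1 x hu _ _ (Finset.image_subset_image hss) b

variable {X : Type*} [NormedAddCommGroup X] [NormedSpace ℝ X]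



lemma dom_finset (x : ℕ → X) (C : ℝ) (hrd : RightDominant C x)
    (s : Finset ℕ) (K M : ℕ → ℕ) (a : ℕ → ℝ)
    (h1 : ∀ i ∈ s, K i ≤ M i)
    (h2 : ∀ i ∈ s, ∀ j ∈ s, i < j → M i < K j) :
    ‖∑ i ∈ s, a i • x (K i)‖ ≤ C * ‖∑ i ∈ s, a i • x (M i)‖ := by
  classical
  set n := s.card with hn
  set e := s.orderIsoOfFin rfl with he
  set B := s.sup M + 1 with hB
  have hmem : ∀ j : Fin n, (e j : ℕ) ∈ s := fun j => (e j).2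
  set k' : ℕ → ℕ := fun j => if h : j < n then K (e ⟨j, h⟩) else B + j with hk'
  set m' : ℕ → ℕ := fun j => if h : j < n then M (e ⟨j, h⟩) else B + j with hm'
  set a' : ℕ → ℝ := fun j => if h : j < n then a (e ⟨j, h⟩) else 0 with ha'
  have hc1 : ∀ j, k' j ≤ m' j := by
    intro j
    by_cases h : j < n
    · simp only [hk', hm', dif_pos h]
      exact h1 _ (hmem ⟨j, h⟩)
    · simp [hk', hm', dif_neg h]
  have hc2 : ∀ j, m' j < k' (j + 1) := by
    intro j
    by_cases h : j + 1 < n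
    · have hj : j < n := Nat.lt_of_succ_lt h
      simp only [hk', hm', dif_pos h, dif_pos hj]
      refine h2 _ (hmem ⟨j, hj⟩) _ (hmem ⟨j + 1, h⟩) ?_
      have : (⟨j, hj⟩ : Fin n) < ⟨j + 1, h⟩ := by
        simp [Fin.lt_def]
      exact_mod_cast e.strictMono this
    · by_cases hj : j < n
      · simp only [hk', hm', dif_pos hj, dif_neg h]
        have : M (e ⟨j, hj⟩) ≤ s.sup M := Finset.le_sup (hmem ⟨j, hj⟩)
        omega
      · simp only [hk', hm', dif_neg h, dif_neg hj]
        omega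
  have key := hrd n k' m' a' hc1 hc2
  have sum_eq : ∀ g : ℕ → X,
      ∑ j ∈ Finset.range n, (if h : j < n then g (e ⟨j, h⟩) else 0) = ∑ i ∈ s, g i := by
    intro g
    rw [← Fin.sum_univ_eq_sum_range (fun j => if h : j < n then g (e ⟨j, h⟩) else 0) n]
    have : ∀ j : Fin n, (if h : (j : ℕ) < n then g (e ⟨j, h⟩) else 0) = g (e j) := by
      intro j; rw [dif_pos j.isLt]
    rw [Finset.sum_congr rfl fun j _ => this j]
    rw [← Finset.sum_coe_sort s g]
    exact Equiv.sum_comp e.toEquiv (fun i : s => g i)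
  have eK : ∑ j ∈ Finset.range n, a' j • x (k' j) = ∑ i ∈ s, a i • x (K i) := by
    rw [← sum_eq (fun i => a i • x (K i))]
    refine Finset.sum_congr rfl fun j hj => ?_
    have h : j < n := Finset.mem_range.mp hj
    simp only [ha', hk', dif_pos h]
  have eM : ∑ j ∈ Finset.range n, a' j • x (m' j) = ∑ i ∈ s, a i • x (M i) := by
    rw [← sum_eq (fun i => a i • x (M i))]
    refine Finset.sum_congr rfl fun j hj => ?_
    have h : j < n := Finset.mem_range.mp hj
    simp only [ha', hm', dif_pos h]
  rw [eK, eM] at key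
  exact key

lemma dom_gap (x : ℕ → X) (hu : OneUnconditional x) (C : ℝ) (hC : 0 < C)
    (hrd : RightDominant C x)
    (s t : Finset ℕ) (hst : s ⊆ t) (K M : ℕ → ℕ) (a : ℕ → ℝ)
    (hMinj : Set.InjOn M t)
    (h1 : ∀ i ∈ s, K i ≤ M i)
    (hgap : ∀ i ∈ s, ∀ l ∈ s, ∀ j ∈ s, i < l → l < j → M i < K j) :
    ‖∑ i ∈ s, a i • x (K i)‖ ≤ 2 * C * ‖∑ i ∈ t, a i • x (M i)‖ := by
  classical
  set rank : ℕ → ℕ := fun i => (s.filter (· < i)).card with hrank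
  have hrmono : ∀ i ∈ s, ∀ j, i < j → rank i < rank j := by
    intro i hi j hij
    have hsub : s.filter (· < i) ⊆ s.filter (· < j) := by
      intro l hl
      obtain ⟨hls, hli⟩ := Finset.mem_filter.mp hl
      exact Finset.mem_filter.mpr ⟨hls, lt_trans hli hij⟩
    refine Finset.card_lt_card ((Finset.ssubset_iff_of_subset hsub).mpr ?_)
    exact ⟨i, Finset.mem_filter.mpr ⟨hi, hij⟩, fun hmem => by
      have := (Finset.mem_filter.mp hmem).2
      omega⟩
  have hmid : ∀ i ∈ s, ∀ j ∈ s, i < j → rank i % 2 = rank j % 2 →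
      ∃ l ∈ s, i < l ∧ l < j := by
    intro i hi j hj hij hpar
    by_contra hno
    push_neg at hno
    have hsub : s.filter (· < j) ⊆ insert i (s.filter (· < i)) := by
      intro l hl
      obtain ⟨hls, hlj⟩ := Finset.mem_filter.mp hl
      rcases lt_trichotomy l i with h | h | h
      · exact Finset.mem_insert.mpr (Or.inr (Finset.mem_filter.mpr ⟨hls, h⟩))
      · exact Finset.mem_insert.mpr (Or.inl h)
      · exact absurd hlj (not_lt.mpr (hno l hls h))
    have hle : rank j ≤ rank i + 1 :=
      le_trans (Finset.card_le_card hsub) (Finset.card_insert_le _ _)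
    have hlt := hrmono i hi j hij
    omega
  set s0 := s.filter (fun i => rank i % 2 = 0) with hs0
  set s1 := s.filter (fun i => ¬ rank i % 2 = 0) with hs1
  have hchain : ∀ (u : Finset ℕ), u ⊆ s → (∀ i ∈ u, ∀ j ∈ u, i < j → rank i % 2 = rank j % 2) →
      ‖∑ i ∈ u, a i • x (K i)‖ ≤ C * ‖∑ i ∈ t, a i • x (M i)‖ := by
    intro u hus hpar
    have h2 : ∀ i ∈ u, ∀ j ∈ u, i < j → M i < K j := by
      intro i hi j hj hij
      obtain ⟨l, hls, hil, hlj⟩ := hmid i (hus hi) j (hus hj) hij (hpar i hi j hj hij)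
      exact hgap i (hus hi) l hls j (hus hj) hil hlj
    have hb := dom_finset x C hrd u K M a (fun i hi => h1 i (hus hi)) h2
    have hsup := supp_comp x hu u t (hus.trans hst) M hMinj a
    calc ‖∑ i ∈ u, a i • x (K i)‖ ≤ C * ‖∑ i ∈ u, a i • x (M i)‖ := hb
      _ ≤ C * ‖∑ i ∈ t, a i • x (M i)‖ := by
          exact mul_le_mul_of_nonneg_left hsup (le_of_lt hC)
  have hsplit : ∑ i ∈ s, a i • x (K i) = (∑ i ∈ s0, a i • x (K i)) + ∑ i ∈ s1, a i • x (K i) :=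
    (Finset.sum_filter_add_sum_filter_not s _ _).symm
  have b0 := hchain s0 (Finset.filter_subset _ _) (by
    intro i hi j hj _
    have hi' := (Finset.mem_filter.mp hi).2
    have hj' := (Finset.mem_filter.mp hj).2
    omega)
  have b1 := hchain s1 (Finset.filter_subset _ _) (by
    intro i hi j hj _
    have hi' := (Finset.mem_filter.mp hi).2
    have hj' := (Finset.mem_filter.mp hj).2
    omega)
  calc ‖∑ i ∈ s, a i • x (K i)‖
      ≤ ‖∑ i ∈ s0, a i • x (K i)‖ + ‖∑ i ∈ s1, a i • x (K i)‖ := by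
        rw [hsplit]; exact norm_add_le _ _
    _ ≤ 2 * C * ‖∑ i ∈ t, a i • x (M i)‖ := by linarith


/-- **Theorem.** If `x` is a normalized 1-unconditional `C`-right dominant sequence in `X`,
then the interlaced sequence `w (2i) = (x i, 0)`, `w (2i+1) = (0, x i)` in `X × X` (with
the max norm, which is the product norm) is `5C`-right dominant. -/
theorem rightDominant_interlace_prod
    (X : Type) [NormedAddCommGroup X] [NormedSpace ℝ X]
    (x : ℕ → X) (hnorm : ∀ i, ‖x i‖ = 1) (hu : OneUnconditional x)
    (C : ℝ) (hC : 0 < C) (hrd : RightDominant C x)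
    (w : ℕ → X × X) (hw0 : ∀ i, w (2 * i) = (x i, 0)) (hw1 : ∀ i, w (2 * i + 1) = (0, x i)) :
    RightDominant (5 * C) w := by
  classical
  intro r k m a hkm hchain
  -- basic facts about the index sequences
  have hmk : ∀ i j, i < j → m i < k j := by
    intro i j hij
    obtain ⟨d, rfl⟩ : ∃ d, j = i + 1 + d := ⟨j - (i + 1), by omega⟩
    clear hij
    induction d with
    | zero => exact hchain i
    | succ d ih =>
        have h1 : m (i + 1 + d) < k (i + 1 + d + 1) := hchain _
        have h2 : k (i + 1 + d) ≤ m (i + 1 + d) := hkm _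
        calc m i < k (i + 1 + d) := ih
          _ ≤ m (i + 1 + d) := h2
          _ < k (i + 1 + (d + 1)) := by rw [show i + 1 + (d + 1) = i + 1 + d + 1 by ring]; exact h1
  set K : ℕ → ℕ := fun i => k i / 2 with hK
  set M : ℕ → ℕ := fun i => m i / 2 with hM
  set S := Finset.range r with hS
  -- decomposition of w at arbitrary index
  have hwf : ∀ n : ℕ, (w n).1 = if n % 2 = 0 then x (n / 2) else 0 := by
    intro n
    rcases Nat.even_or_odd n with ⟨c, hc⟩ | ⟨c, hc⟩
    · have : n = 2 * c := by omega
      subst this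
      rw [hw0 c]
      simp [Nat.mul_div_cancel_left c (by norm_num : 0 < 2), Nat.mul_mod_right]
    · subst hc
      rw [hw1 c]
      have h2 : (2 * c + 1) % 2 = 1 := by omega
      simp [h2]
  have hws : ∀ n : ℕ, (w n).2 = if n % 2 = 0 then 0 else x (n / 2) := by
    intro n
    rcases Nat.even_or_odd n with ⟨c, hc⟩ | ⟨c, hc⟩
    · have : n = 2 * c := by omega
      subst this
      rw [hw0 c]
      simp [Nat.mul_mod_right]
    · subst hc
      rw [hw1 c]
      have h2 : (2 * c + 1) % 2 = 1 := by omega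
      have h3 : (2 * c + 1) / 2 = c := by omega
      simp [h2, h3]
  -- coordinates of the two sums
  have coord : ∀ (f : ℕ → ℕ),
      (∑ i ∈ S, a i • w (f i)).1 = ∑ i ∈ S.filter (fun i => f i % 2 = 0), a i • x (f i / 2) ∧
      (∑ i ∈ S, a i • w (f i)).2 = ∑ i ∈ S.filter (fun i => ¬ f i % 2 = 0), a i • x (f i / 2) := by
    intro f
    constructor
    · rw [Prod.fst_sum, Finset.sum_filter]
      refine Finset.sum_congr rfl fun i _ => ?_
      rw [Prod.smul_fst, hwf (f i)]
      by_cases h : f i % 2 = 0 <;> simp [h]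
    · rw [Prod.snd_sum, Finset.sum_filter]
      refine Finset.sum_congr rfl fun i _ => ?_
      rw [Prod.smul_snd, hws (f i)]
      by_cases h : f i % 2 = 0 <;> simp [h]
  obtain ⟨hk1, hk2⟩ := coord k
  obtain ⟨hm1, hm2⟩ := coord m
  set V := ∑ i ∈ S, a i • w (m i) with hV
  have hVf : ‖(V).1‖ ≤ ‖V‖ := norm_fst_le V
  have hVs : ‖(V).2‖ ≤ ‖V‖ := norm_snd_le V
  set Em := S.filter (fun i => m i % 2 = 0) with hEm
  set Om := S.filter (fun i => ¬ m i % 2 = 0) with hOm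
  -- injectivity of M on Em and Om
  have hminc : ∀ i j, i < j → m i < m j := fun i j hij => lt_of_lt_of_le (hmk i j hij) (hkm j)
  have hinjEm : Set.InjOn M Em := by
    intro i hi j hj hij
    simp only [hEm, Finset.coe_filter, Set.mem_setOf_eq] at hi hj
    rcases lt_trichotomy i j with h | h | h
    · have := hminc i j h; exfalso; simp only [hM] at hij; omega
    · exact h
    · have := hminc j i h; exfalso; simp only [hM] at hij; omega
  have hinjOm : Set.InjOn M Om := by
    intro i hi j hj hij
    simp only [hOm, Finset.coe_filter, Set.mem_setOf_eq] at hi hj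
    rcases lt_trichotomy i j with h | h | h
    · have := hminc i j h; exfalso; simp only [hM] at hij; omega
    · exact h
    · have := hminc j i h; exfalso; simp only [hM] at hij; omega
  have h1 : ∀ i, K i ≤ M i := fun i => Nat.div_le_div_right (hkm i)
  have hgapAll : ∀ i l j, i < l → l < j → M i < K j := by
    intro i l j hil hlj
    have h1 := hmk i l hil
    have h2 := hkm l
    have h3 := hmk l j hlj
    simp only [hM, hK]
    omega
  -- per-class bound
  have classBound : ∀ (s t : Finset ℕ), s ⊆ t → Set.InjOn M t →
      (∀ i ∈ t, ‖∑ i ∈ t, a i • x (M i)‖ ≤ ‖V‖) →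
      ‖∑ i ∈ s, a i • x (K i)‖ ≤ 2 * C * ‖V‖ := by
    intro s t hst hinj hTle
    rcases Finset.eq_empty_or_nonempty t with rfl | ⟨i0, hi0⟩
    · have hse : s = ∅ := Finset.subset_empty.mp hst
      subst hse
      simp only [Finset.sum_empty, norm_zero]
      positivity
    · have hb := dom_gap x hu C hC hrd s t hst K M a hinj
        (fun i _ => h1 i)
        (fun i _ l hls j _ hil hlj => hgapAll i l j hil hlj)
      refine le_trans hb ?_
      have := hTle i0 hi0
      have h2C : (0:ℝ) ≤ 2 * C := by positivity
      exact mul_le_mul_of_nonneg_left this h2C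
  -- the four classes
  set Ek := S.filter (fun i => k i % 2 = 0) with hEk
  set Ok := S.filter (fun i => ¬ k i % 2 = 0) with hOk
  have splitE : ∀ (u : Finset ℕ), u ⊆ S →
      ‖∑ i ∈ u, a i • x (K i)‖ ≤ 4 * C * ‖V‖ := by
    intro u huS
    set u0 := u.filter (fun i => m i % 2 = 0) with hu0
    set u1 := u.filter (fun i => ¬ m i % 2 = 0) with hu1
    have hsub0 : u0 ⊆ Em := by
      intro i hi
      obtain ⟨hiu, him⟩ := Finset.mem_filter.mp hi
      exact Finset.mem_filter.mpr ⟨huS hiu, him⟩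
    have hsub1 : u1 ⊆ Om := by
      intro i hi
      obtain ⟨hiu, him⟩ := Finset.mem_filter.mp hi
      exact Finset.mem_filter.mpr ⟨huS hiu, him⟩
    have c0 := classBound u0 Em hsub0 hinjEm (fun i _ => by rw [← hm1] at *; exact hVf)
    have c1 := classBound u1 Om hsub1 hinjOm (fun i _ => by rw [← hm2] at *; exact hVs)
    have hsplit : ∑ i ∈ u, a i • x (K i)
        = (∑ i ∈ u0, a i • x (K i)) + ∑ i ∈ u1, a i • x (K i) :=
      (Finset.sum_filter_add_sum_filter_not u _ _).symm
    calc ‖∑ i ∈ u, a i • x (K i)‖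
        ≤ ‖∑ i ∈ u0, a i • x (K i)‖ + ‖∑ i ∈ u1, a i • x (K i)‖ := by
          rw [hsplit]; exact norm_add_le _ _
      _ ≤ 4 * C * ‖V‖ := by linarith
  have bf : ‖(∑ i ∈ S, a i • w (k i)).1‖ ≤ 4 * C * ‖V‖ := by
    rw [hk1]; exact splitE Ek (Finset.filter_subset _ _)
  have bs : ‖(∑ i ∈ S, a i • w (k i)).2‖ ≤ 4 * C * ‖V‖ := by
    rw [hk2]; exact splitE Ok (Finset.filter_subset _ _)
  have hnorm4 : ‖∑ i ∈ S, a i • w (k i)‖ ≤ 4 * C * ‖V‖ := by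
    rw [Prod.norm_def]
    exact max_le bf bs
  have hCV : 0 ≤ C * ‖V‖ := by positivity
  calc ‖∑ i ∈ S, a i • w (k i)‖ ≤ 4 * C * ‖V‖ := hnorm4
    _ ≤ 5 * C * ‖V‖ := by linarith
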